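/- Let p = 0. Let W := {(f,g) ∈ L × L : zʲ·f and z⁻ʲ·g are V-holomorphic}. Then the images of the pairs c_{rs} := (zˢuʳ, 0), for 0 ≤ r ≤ ⌊(j−2)/k⌋ and kr−j+1 ≤ s ≤ −1, form a ℂ-basis of the quotient vector space (L × L)/(ℂ[z,u]² + W). In particular this quotient (which computes H¹(Z_k; E) for the split bundle E = O(−j) ⊕ O(j)) has ℂ-dimension equal to the number of lattice points (r,s) with 0 ≤ r ≤ ⌊(j−2)/k⌋ and kr−j+1 ≤ s ≤ −1. -/

import Mathlib

noncomputable section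

/-- `L = ℂ[z,z⁻¹][u]`: Laurent polynomials in `z` with polynomial coefficients in `u`,
realised as the algebra of finitely supported ℂ-linear combinations of monomials on the
exponent monoid `ℤ × ℕ`, where `(s, r)` is the exponent of the monomial `zˢuʳ`. -/
abbrev L : Type := AddMonoidAlgebra ℂ (ℤ × ℕ)

/-- The monomial `zˢ` (`s ∈ ℤ`). -/
def zp (s : ℤ) : L := AddMonoidAlgebra.single (s, 0) 1

/-- The monomial `u`. -/
def uu : L := AddMonoidAlgebra.single (0, 1) 1

/-- `f` is V-holomorphic: every monomial `zˢuʳ` occurring in `f` satisfies `s ≤ k·r`,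
i.e. `f` is holomorphic in the coordinates `(z⁻¹, zᵏu)` of the chart `V` of `Z_k`. -/
def VHol (k : ℕ) (f : L) : Prop := ∀ (s : ℤ) (r : ℕ), f.coeff (s, r) ≠ 0 → s ≤ (k : ℤ) * r

/-- `f` lies in `ℂ[z,u] ⊆ L`, i.e. is holomorphic on the chart `U`. -/
def MemPolyRing (f : L) : Prop := ∀ (s : ℤ) (r : ℕ), f.coeff (s, r) ≠ 0 → 0 ≤ s

/-! With `p = 0` everything happens monomial by monomial. A monomial `zˢuʳ` in the second slot
is always a coboundary (from `U` if `s ≥ 0`, from `V` since then `s - j ≤ kr`), and in the first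
slot it is one as soon as `s ≥ 0` or `s + j ≤ kr`. Conversely the coefficient of the first slot at
a gap monomial, `kr - j < s < 0`, vanishes on both `Γ(U)` and `Γ(V)`. These coefficients are
therefore coordinates on the quotient, dual to the classes `c_{rs}`. -/

open AddMonoidAlgebra

lemma coeff_zp_mul (a s : ℤ) (r : ℕ) (f : L) : (zp a * f).coeff (s, r) = f.coeff (s - a, r) := by
  have : ((s, r) : ℤ × ℕ) = (a, 0) + (s - a, r) := by ext <;> simp
  rw [this, zp, coeff_single_mul_add, one_mul]

lemma zp_mul_single (a s : ℤ) (r : ℕ) (c : ℂ) : zp a * single (s, r) c = single (s + a, r) c := by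
  rw [zp, single_mul_single, one_mul, Prod.mk_add_mk, zero_add, add_comm a]

lemma AddMonoidAlgebra.eq_of_coeff_single_ne_zero {R M : Type*} [Semiring R] {m m' : M} {c : R}
    (h : (single m c).coeff m' ≠ 0) : m' = m := by
  by_contra hne
  exact h (Finsupp.single_eq_of_ne hne)

lemma vHol_single {k : ℕ} {s : ℤ} {r : ℕ} (h : s ≤ (k : ℤ) * r) (c : ℂ) :
    VHol k (single (s, r) c) := by
  intro s' r' hc
  cases eq_of_coeff_single_ne_zero hc
  exact h

lemma memPolyRing_single {s : ℤ} {r : ℕ} (h : 0 ≤ s) (c : ℂ) : MemPolyRing (single (s, r) c) := by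
  intro s' r' hc
  cases eq_of_coeff_single_ne_zero hc
  exact h

lemma memPolyRing_zero : MemPolyRing 0 := fun _ _ h => absurd rfl h

lemma vHol_zero (k : ℕ) : VHol k 0 := fun _ _ h => absurd rfl h

def sectionsU : Set (L × L) := {x | MemPolyRing x.1 ∧ MemPolyRing x.2}

def sectionsV (k j : ℕ) : Set (L × L) :=
  {x | VHol k (zp (j : ℤ) * x.1) ∧ VHol k (zp (-(j : ℤ)) * x.2)}

def coboundaries (k j : ℕ) : Submodule ℂ (L × L) := Submodule.span ℂ (sectionsU ∪ sectionsV k j)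

def InGap (k j : ℕ) (m : ℤ × ℕ) : Prop := (k : ℤ) * m.2 - j < m.1 ∧ m.1 < 0

abbrev GapIndex (k j : ℕ) : Type :=
  {x : ℕ × ℤ // (x.1 : ℤ) ≤ ((j : ℤ) - 2) / k ∧ (k : ℤ) * x.1 - j + 1 ≤ x.2 ∧ x.2 ≤ -1}

def gapCocycle (k j : ℕ) (i : GapIndex k j) : (L × L) ⧸ coboundaries k j :=
  (coboundaries k j).mkQ (single (i.val.2, i.val.1) 1, 0)

def gapCoeffs (k j : ℕ) : L × L →ₗ[ℂ] (GapIndex k j → ℂ) :=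
  LinearMap.pi fun i => Finsupp.lapply (i.val.2, i.val.1) ∘ₗ
    (coeffLinearEquiv ℂ).toLinearMap ∘ₗ LinearMap.fst ℂ L L

section

variable {k j : ℕ}

lemma coeff_fst_eq_zero_of_mem_coboundaries {x : L × L} (hx : x ∈ coboundaries k j)
    {m : ℤ × ℕ} (hm : InGap k j m) : x.1.coeff m = 0 := by
  induction hx using Submodule.span_induction with
  | mem x hx =>
    by_contra h
    rcases hx with hU | hV
    · exact absurd (hU.1 m.1 m.2 h) (not_le.2 hm.2)
    · have := hV.1 (m.1 + j) m.2 (by rwa [coeff_zp_mul, add_sub_cancel_right])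
      exact absurd this (by linarith [hm.1])
  | zero => simp
  | add x y _ _ hx hy => simp [hx, hy]
  | smul c x _ hx => simp [hx]

lemma single_fst_mem_coboundaries {m : ℤ × ℕ} (hm : ¬ InGap k j m) (c : ℂ) :
    (single m c, (0 : L)) ∈ coboundaries k j := by
  obtain ⟨s, r⟩ := m
  apply Submodule.subset_span
  by_cases hs : 0 ≤ s
  · exact Or.inl ⟨memPolyRing_single hs c, memPolyRing_zero⟩
  · refine Or.inr ⟨?_, by simpa only [mul_zero] using vHol_zero k⟩
    rw [zp_mul_single]
    exact vHol_single (by simp only [InGap, not_and_or, not_lt] at hm; omega) c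

lemma snd_mem_coboundaries (g : L) : ((0 : L), g) ∈ coboundaries k j := by
  change g ∈ (coboundaries k j).comap (LinearMap.inr ℂ L L)
  induction g using AddMonoidAlgebra.induction_linear with
  | zero => exact zero_mem _
  | add f g hf hg => exact add_mem hf hg
  | single m c =>
    obtain ⟨s, r⟩ := m
    show ((0 : L), single (s, r) c) ∈ coboundaries k j
    apply Submodule.subset_span
    by_cases hs : 0 ≤ s
    · exact Or.inl ⟨memPolyRing_zero, memPolyRing_single hs c⟩
    · refine Or.inr ⟨by simpa only [mul_zero] using vHol_zero k, ?_⟩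
      rw [zp_mul_single]
      have : (0 : ℤ) ≤ k * r := by positivity
      exact vHol_single (by omega) c

lemma gapCoeffs_apply (x : L × L) (i : GapIndex k j) :
    gapCoeffs k j x i = x.1.coeff (i.val.2, i.val.1) := rfl

lemma inGap_of_gapIndex (i : GapIndex k j) : InGap k j (i.val.2, i.val.1) := by
  obtain ⟨_, h₁, h₂⟩ := i.2
  exact ⟨by dsimp only; omega, by dsimp only; omega⟩

lemma exists_gapIndex_of_inGap (hk : 1 ≤ k) {m : ℤ × ℕ} (hm : InGap k j m) :
    ∃ i : GapIndex k j, (i.val.2, i.val.1) = m := by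
  obtain ⟨s, r⟩ := m
  obtain ⟨h₁, h₂⟩ : (k : ℤ) * r - j < s ∧ s < 0 := hm
  have hr : (r : ℤ) ≤ ((j : ℤ) - 2) / k := by
    rw [Int.le_ediv_iff_mul_le (by omega)]
    linarith
  exact ⟨⟨(r, s), hr, by dsimp only; omega, by dsimp only; omega⟩, rfl⟩

lemma coboundaries_le_ker_gapCoeffs : coboundaries k j ≤ LinearMap.ker (gapCoeffs k j) :=
  fun _ hx => funext fun i => coeff_fst_eq_zero_of_mem_coboundaries hx (inGap_of_gapIndex i)

lemma gapCoeffs_single (i : GapIndex k j) :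
    gapCoeffs k j (single (i.val.2, i.val.1) 1, 0) = Pi.single i 1 := by
  ext i'
  rw [gapCoeffs_apply, coeff_single, Finsupp.single_apply, Pi.single_apply]
  simp [Subtype.ext_iff, Prod.ext_iff, and_comm, eq_comm]

lemma linearIndependent_gapCocycle : LinearIndependent ℂ (gapCocycle k j) := by
  apply LinearIndependent.of_comp
    ((coboundaries k j).liftQ (gapCoeffs k j) coboundaries_le_ker_gapCoeffs)
  have : (coboundaries k j).liftQ (gapCoeffs k j) coboundaries_le_ker_gapCoeffs ∘ gapCocycle k j =
      fun i => Pi.single i 1 := funext gapCoeffs_single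
  rw [this]
  exact Pi.linearIndependent_single_one _ _

lemma span_range_gapCocycle (hk : 1 ≤ k) :
    Submodule.span ℂ (Set.range (gapCocycle k j)) = ⊤ := by
  set N := coboundaries k j
  set S := Submodule.span ℂ (Set.range (gapCocycle k j))
  have hN {x : L × L} (hx : x ∈ N) : N.mkQ x = 0 := (Submodule.Quotient.mk_eq_zero N).2 hx
  have hfst (f : L) : f ∈ S.comap (N.mkQ ∘ₗ LinearMap.inl ℂ L L) := by
    induction f using AddMonoidAlgebra.induction_linear with
    | zero => exact zero_mem _
    | add f g hf hg => exact add_mem hf hg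
    | single m c =>
      show N.mkQ (single m c, 0) ∈ S
      by_cases hm : InGap k j m
      · obtain ⟨i, rfl⟩ := exists_gapIndex_of_inGap hk hm
        have : (single (i.val.2, i.val.1) c, (0 : L)) = c • (single (i.val.2, i.val.1) 1, 0) := by
          rw [Prod.smul_mk, smul_single', mul_one, smul_zero]
        rw [this, map_smul]
        exact S.smul_mem c (Submodule.subset_span ⟨i, rfl⟩)
      · rw [hN (single_fst_mem_coboundaries hm c)]
        exact zero_mem S
  refine eq_top_iff.2 fun q _ => ?_
  obtain ⟨x, rfl⟩ := N.mkQ_surjective q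
  rw [← Prod.fst_add_snd x, map_add, hN (snd_mem_coboundaries x.2), add_zero]
  exact hfst x.1

end

/-- For the split bundle (`p = 0`), the images of the canonical cocycles
`c_{rs} = (zˢuʳ, 0)`, for `0 ≤ r ≤ ⌊(j−2)/k⌋` and `kr−j+1 ≤ s ≤ −1`, form a ℂ-basis of the
Čech quotient `(L × L)/(ℂ[z,u]² + W)` computing `H¹(Z_k; O(−j) ⊕ O(j))`; in particular its
dimension is the number of such lattice points `(r,s)`. -/
theorem split_H1_basis (k : ℕ) (hk : 1 ≤ k) (j : ℕ) :
    let W : Set (L × L) :=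
      {x | VHol k (zp (j : ℤ) * x.1) ∧ VHol k (zp (-(j : ℤ)) * x.2)}
    let P : Set (L × L) := {x | MemPolyRing x.1 ∧ MemPolyRing x.2}
    let N : Submodule ℂ (L × L) := Submodule.span ℂ (P ∪ W)
    let I := {x : ℕ × ℤ //
      (x.1 : ℤ) ≤ ((j : ℤ) - 2) / k ∧ (k : ℤ) * x.1 - j + 1 ≤ x.2 ∧ x.2 ≤ -1}
    let e : I → (L × L) ⧸ N := fun i =>
      N.mkQ (AddMonoidAlgebra.single (i.val.2, i.val.1) (1 : ℂ), 0)
    LinearIndependent ℂ e ∧ Submodule.span ℂ (Set.range e) = ⊤ ∧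
      Module.finrank ℂ ((L × L) ⧸ N) = Nat.card I := by
  intro W P N I e
  have hli : LinearIndependent ℂ (gapCocycle k j) := linearIndependent_gapCocycle
  have hspan : Submodule.span ℂ (Set.range (gapCocycle k j)) = ⊤ := span_range_gapCocycle hk
  exact ⟨hli, hspan, Module.finrank_eq_nat_card_basis (Module.Basis.mk hli hspan.ge)⟩
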